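/- arXiv:1501.02877 — 13 statements merged into one kernel-verified Lean document; each statement's English description precedes it below -/
import Mathlib

section
/- Every separable regular topological space has weight at most the cardinality of the continuum. -/
open Cardinal TopologicalSpace

/-!
If `D` is dense in a regular space, the sets `interior (closure S)` with `S ⊆ D` already form a
base: a point of an open set `u` has an open neighbourhood `U` with `closure U ⊆ u`, and
`U ⊆ interior (closure (U ∩ D)) ⊆ u`. For countable `D` there are at most `2 ^ ℵ₀ = 𝔠` such sets.
-/

/-- The weight of a topological space: the minimal cardinality of a base. -/
noncomputable def tweight (X : Type u) [TopologicalSpace X] : Cardinal.{u} :=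
  sInf {c : Cardinal.{u} | ∃ B : Set (Set X), IsTopologicalBasis B ∧ #B = c}

theorem tweight_le_mk_of_isTopologicalBasis {X : Type u} [TopologicalSpace X]
    {B : Set (Set X)} (hB : IsTopologicalBasis B) : tweight X ≤ #B :=
  csInf_le' ⟨B, hB, rfl⟩

theorem Dense.isTopologicalBasis_interior_closure {X : Type*} [TopologicalSpace X]
    [RegularSpace X] {D : Set X} (hD : Dense D) :
    IsTopologicalBasis ((fun S => interior (closure S)) '' 𝒫 D) := by
  refine isTopologicalBasis_of_isOpen_of_nhds ?_ ?_
  · rintro _ ⟨S, -, rfl⟩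
    exact isOpen_interior
  · intro x u hx hu
    obtain ⟨V, hV, hVclosed, hVu⟩ := exists_mem_nhds_isClosed_subset (hu.mem_nhds hx)
    refine ⟨interior (closure (interior V ∩ D)), ⟨_, Set.inter_subset_right, rfl⟩, ?_, ?_⟩
    · exact interior_maximal (hD.open_subset_closure_inter isOpen_interior) isOpen_interior
        (mem_interior_iff_mem_nhds.2 hV)
    · calc interior (closure (interior V ∩ D)) ⊆ closure (interior V ∩ D) := interior_subset
        _ ⊆ closure V := closure_mono (Set.inter_subset_left.trans interior_subset)
        _ = V := hVclosed.closure_eq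
        _ ⊆ u := hVu

theorem Set.Countable.mk_powerset_le_continuum {α : Type u} {D : Set α} (hD : D.Countable) :
    #(𝒫 D) ≤ 𝔠 :=
  calc #(𝒫 D) = 2 ^ #D := mk_powerset D
    _ ≤ 2 ^ ℵ₀ := power_le_power_left two_ne_zero (mk_le_aleph0_iff.mpr hD)
    _ = 𝔠 := two_power_aleph0

/-- Every separable regular (T₃) space has weight at most the continuum. -/
theorem weight_le_continuum_of_separable (X : Type u) [TopologicalSpace X]
    [T3Space X] [SeparableSpace X] : tweight X ≤ Cardinal.continuum := by
  obtain ⟨D, hD_countable, hD_dense⟩ := exists_countable_dense X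
  calc tweight X ≤ #((fun S => interior (closure S)) '' 𝒫 D) :=
        tweight_le_mk_of_isTopologicalBasis hD_dense.isTopologicalBasis_interior_closure
    _ ≤ #(𝒫 D) := mk_image_le
    _ ≤ 𝔠 := hD_countable.mk_powerset_le_continuum
end

section
/- If {X_i : i ∈ I} is a family of topological spaces each of density character at most κ (κ an infinite cardinal) and |I| ≤ 2^κ, then the product space ∏_{i∈I} X_i has density character at most κ. -/
/-!
Let `K` be a discrete space of cardinality `κ`. Each `X i` is a continuous image of `K` with dense
range, and since `I` embeds into `K → Prop`, the product `∏ i, X i` is a continuous image of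
`(K → Prop) → K` with dense range. In the latter space the maps that only depend on the restriction
of their argument to a finite set of coordinates are dense, because finitely many distinct
functions are already separated by finitely many coordinates; and there are only `κ` of them.
-/

open Cardinal TopologicalSpace

/-- The density character of a topological space: the minimal cardinality of a dense subset. -/
noncomputable def tdensity (X : Type u) [TopologicalSpace X] : Cardinal.{u} :=
  sInf {c : Cardinal.{u} | ∃ s : Set X, Dense s ∧ #s = c}

section Density

variable {X Y : Type u} [TopologicalSpace X] [TopologicalSpace Y]

theorem tdensity_le_mk_of_dense {s : Set X} (hs : Dense s) : tdensity X ≤ #s :=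
  csInf_le' ⟨s, hs, rfl⟩

theorem exists_dense_mk_eq_tdensity (X : Type u) [TopologicalSpace X] :
    ∃ s : Set X, Dense s ∧ #s = tdensity X :=
  csInf_mem (s := {c | ∃ s : Set X, Dense s ∧ #s = c}) ⟨#(Set.univ : Set X), _, dense_univ, rfl⟩

theorem tdensity_eq_zero [IsEmpty X] : tdensity X = 0 :=
  nonpos_iff_eq_zero.1 <|
    (tdensity_le_mk_of_dense dense_univ).trans_eq <| mk_univ.trans (mk_eq_zero X)

theorem tdensity_le_of_denseRange {f : X → Y} (hf : Continuous f) (hdf : DenseRange f) :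
    tdensity Y ≤ tdensity X := by
  obtain ⟨s, hs, hs_card⟩ := exists_dense_mk_eq_tdensity X
  calc tdensity Y ≤ #(f '' s) := tdensity_le_mk_of_dense (hdf.dense_image hf hs)
    _ ≤ tdensity X := hs_card ▸ mk_image_le

theorem exists_denseRange_of_tdensity_le [Nonempty X] {K : Type u} (h : tdensity X ≤ #K) :
    ∃ g : K → X, DenseRange g := by
  obtain ⟨s, hs, hs_card⟩ := exists_dense_mk_eq_tdensity X
  obtain ⟨e⟩ := le_def _ _ |>.1 (hs_card.trans_le h)
  have : Nonempty s := hs.nonempty.to_subtype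
  refine ⟨(↑) ∘ Function.invFun e, ?_⟩
  rw [DenseRange, Set.range_comp, (Function.invFun_surjective e.injective).range_eq,
    Set.image_univ, Subtype.range_val]
  exact hs

end Density

theorem dense_pi_of_forall_finset_exists_eq {ι : Type*} {Y : ι → Type*}
    [∀ i, TopologicalSpace (Y i)] {D : Set (∀ i, Y i)}
    (h : ∀ (x : ∀ i, Y i) (t : Finset ι), ∃ d ∈ D, ∀ i ∈ t, d i = x i) : Dense D := by
  refine dense_iff_inter_open.2 fun U hU ⟨x, hx⟩ => ?_
  obtain ⟨t, u, hxu, htu⟩ := isOpen_pi_iff.1 hU x hx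
  obtain ⟨d, hd, hdx⟩ := h x t
  exact ⟨d, htu fun i hi => hdx i hi ▸ (hxu i hi).2, hd⟩

theorem Finset.exists_injOn_restrict {ι β : Type*} (t : Finset (ι → β)) :
    ∃ F : Finset ι, Set.InjOn F.restrict (t : Set (ι → β)) := by
  classical
  have hsep (p : t.offDiag) : ∃ i, p.1.1 i ≠ p.1.2 i :=
    Function.ne_iff.1 (Finset.mem_offDiag.1 p.2).2.2
  choose c hc using hsep
  refine ⟨t.offDiag.attach.image c, fun f hf g hg hfg => by_contra fun hne => ?_⟩
  let p : t.offDiag := ⟨(f, g), Finset.mem_offDiag.2 ⟨hf, hg, hne⟩⟩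
  exact hc p (congrFun hfg ⟨c p, Finset.mem_image_of_mem c (Finset.mem_attach _ p)⟩)

def finitaryMaps (ι β K : Type*) : Set ((ι → β) → K) :=
  Set.range fun p : Σ F : Finset ι, (F → β) → K => p.2 ∘ p.1.restrict

theorem dense_finitaryMaps (ι β K : Type*) [Nonempty β] [TopologicalSpace K] :
    Dense (finitaryMaps ι β K) := by
  refine dense_pi_of_forall_finset_exists_eq fun x t => ?_
  obtain ⟨F, hF⟩ := t.exists_injOn_restrict
  refine ⟨(x ∘ Function.invFunOn F.restrict t) ∘ F.restrict, ⟨⟨F, _⟩, rfl⟩, fun f hf => ?_⟩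
  exact congrArg x (hF.leftInvOn_invFunOn hf)

theorem mk_finitaryMaps_le {K : Type u} (hK : ℵ₀ ≤ #K) : #(finitaryMaps K Prop K) ≤ #K := by
  have : Infinite K := infinite_iff.2 hK
  refine mk_range_le.trans ?_
  rw [mk_sigma]
  calc (sum fun F : Finset K => #((F → Prop) → K)) ≤ sum fun _ : Finset K => #K :=
        sum_le_sum _ _ fun F => (power_def _ _).symm.trans_le (pow_le hK (lt_aleph0_of_finite _))
    _ = #K * #K := by rw [sum_const', mk_finset_of_infinite]
    _ = #K := mul_eq_self hK

theorem tdensity_prop_arrow_le {K : Type u} [TopologicalSpace K] (hK : ℵ₀ ≤ #K) :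
    tdensity ((K → Prop) → K) ≤ #K :=
  (tdensity_le_mk_of_dense (dense_finitaryMaps K Prop K)).trans (mk_finitaryMaps_le hK)

/-- Hewitt–Marczewski–Pondiczery theorem: if `d(X i) ≤ κ` for each `i ∈ I` and
`|I| ≤ 2 ^ κ` where `κ` is an infinite cardinal, then `d(∏ i, X i) ≤ κ`. -/
theorem density_pi_le (κ : Cardinal.{u}) (hκ : ℵ₀ ≤ κ) (I : Type u) (X : I → Type u)
    [∀ i, TopologicalSpace (X i)] (hI : #I ≤ 2 ^ κ) (hd : ∀ i, tdensity (X i) ≤ κ) :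
    tdensity (∀ i, X i) ≤ κ := by
  rcases isEmpty_or_nonempty (∀ i, X i) with _ | hne
  · exact tdensity_eq_zero.trans_le zero_le
  have : ∀ i, Nonempty (X i) := fun i => ⟨hne.some i⟩
  let K := κ.out
  have hK : #K = κ := mk_out κ
  let : TopologicalSpace K := ⊥
  have : DiscreteTopology K := ⟨rfl⟩
  have : Nonempty K := mk_ne_zero_iff.1 (hK ▸ (aleph0_pos.trans_le hκ).ne')
  choose g hg using fun i => exists_denseRange_of_tdensity_le (K := K) ((hd i).trans hK.ge)
  obtain ⟨e⟩ : Nonempty (I ↪ (K → Prop)) := show Nonempty (I ↪ Set K) by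
    rwa [← le_def, mk_set, hK]
  have hdense : DenseRange fun f : (K → Prop) → K => Pi.map g (f ∘ e) :=
    (DenseRange.piMap hg).comp e.injective.surjective_comp_right.denseRange (by fun_prop)
  calc tdensity (∀ i, X i) ≤ tdensity ((K → Prop) → K) :=
        tdensity_le_of_denseRange (by fun_prop) hdense
    _ ≤ κ := hK ▸ tdensity_prop_arrow_le (hK ▸ hκ)
end

section
/- The product of at most continuum many separable topological spaces is separable. -/
/-!
Inject the index set into Cantor space `ℕ → Bool`. Finitely many points of Cantor space are
already told apart by finitely many coordinates, so every function on a finite subset of it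
extends to a function that factors through the restriction to some `Fin n`. There are only
countably many such functions with values in `ℕ`, so `(ℕ → Bool) → ℕ`, hence `I → ℕ`, is
separable, and `∏ X i` is a continuous image with dense range of `I → ℕ` through dense sequences.
-/

open Cardinal TopologicalSpace Filter Function Set

theorem eventually_injOn_restrict_fin {β : Type*} {F : Set (ℕ → β)} (hF : F.Finite) :
    ∀ᶠ n in atTop, InjOn (fun (s : ℕ → β) (k : Fin n) => s k) F := by
  have : ∀ p ∈ F ×ˢ F,
      ∀ᶠ n in atTop, ((fun k : Fin n => p.1 k) = fun k : Fin n => p.2 k) → p.1 = p.2 := by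
    rintro ⟨s, t⟩ -
    by_cases h : s = t
    · exact .of_forall fun _ _ => h
    obtain ⟨k, hk⟩ := Function.ne_iff.mp h
    filter_upwards [eventually_gt_atTop k] with n hn hst
    exact absurd (congrFun hst ⟨k, hn⟩) hk
  filter_upwards [(eventually_all_finite (hF.prod hF)).2 this] with n hn s hs t ht hst
  exact hn (s, t) ⟨hs, ht⟩ hst

theorem separableSpace_pi_nat_fun {β D : Type*} [Finite β] [Countable D] [TopologicalSpace D] :
    SeparableSpace ((ℕ → β) → D) := by
  rcases isEmpty_or_nonempty (ℕ → β) with h | h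
  · infer_instance
  refine SeparableSpace.of_denseRange
    (fun g : Σ n, (Fin n → β) → D => fun s => g.2 fun k => s k) fun x => ?_
  rw [mem_closure_iff_nhds, nhds_pi]
  intro U hU
  obtain ⟨F, hF, V, hV, hVU⟩ := Filter.mem_pi.1 hU
  obtain ⟨n, hn⟩ := (eventually_injOn_restrict_fin hF).exists
  refine ⟨_, hVU fun s hs => ?_, ⟨n, fun r => x (invFunOn (fun s (k : Fin n) => s k) F r)⟩, rfl⟩
  dsimp only
  rw [hn.leftInvOn_invFunOn hs]
  exact mem_of_mem_nhds (hV s)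

theorem separableSpace_pi_of_injective {I J Y : Type*} [TopologicalSpace Y] [Nonempty Y]
    [SeparableSpace (J → Y)] {e : I → J} (he : Injective e) : SeparableSpace (I → Y) :=
  he.surjective_comp_right.denseRange.separableSpace (continuous_pi fun i => continuous_apply (e i))

/-- The product of at most continuum many separable topological spaces is separable. -/
theorem separableSpace_pi_of_card_le_continuum (I : Type u) (X : I → Type u)
    [∀ i, TopologicalSpace (X i)] (hI : #I ≤ Cardinal.continuum)
    [∀ i, SeparableSpace (X i)] : SeparableSpace (∀ i, X i) := by
  obtain ⟨e⟩ : Nonempty (I ↪ (ℕ → Bool)) := by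
    rw [← lift_mk_le'.{u, 0}]
    simpa using hI
  have : SeparableSpace ((ℕ → Bool) → ℕ) := separableSpace_pi_nat_fun
  have : SeparableSpace (I → ℕ) := separableSpace_pi_of_injective e.injective
  rcases isEmpty_or_nonempty (∀ i, X i) with h | ⟨⟨x⟩⟩
  · infer_instance
  have := fun i => Nonempty.intro (x i)
  exact (DenseRange.piMap fun i => denseRange_denseSeq (X i)).separableSpace
    (continuous_pi fun i => continuous_of_discreteTopology.comp (continuous_apply i))
end

section
/- If L is a Lindelöf subspace of a separable Hausdorff space X, then the network weight of L is at most the cardinality of the continuum. -/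
open Cardinal TopologicalSpace

/-- A family `N` of subsets of `X` is a network if every neighbourhood of every point
contains a member of `N` containing the point. -/
def IsNetwork {X : Type u} [TopologicalSpace X] (N : Set (Set X)) : Prop :=
  ∀ (y : X) (U : Set X), IsOpen U → y ∈ U → ∃ F ∈ N, y ∈ F ∧ F ⊆ U

/-- The network weight of a space: the minimal cardinality of a network. -/
noncomputable def networkWeight (X : Type u) [TopologicalSpace X] : Cardinal.{u} :=
  sInf {c : Cardinal.{u} | ∃ N : Set (Set X), IsNetwork N ∧ #N = c}

/-!
Let `D` be a countable dense subset of `X`. If `y ∈ L` lies in an open set `V`, then `L \ V` is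
Lindelöf and misses `y`, so countably many open sets `Bₙ` separated from open neighbourhoods `Aₙ`
of `y` cover it; hence `y ∈ L ∩ ⋂ₙ cl(Aₙ ∩ D) ⊆ V`. The sets `L ∩ ⋂ₙ cl(Sₙ)` with `Sₙ ⊆ D` thus
form a network of `L`, and there are at most `(2 ^ ℵ₀) ^ ℵ₀ = 𝔠` of them.
-/

open Set

section

variable {X : Type u} [TopologicalSpace X]

theorem networkWeight_le_mk {N : Set (Set X)} (hN : IsNetwork N) : networkWeight X ≤ #N :=
  csInf_le' ⟨N, hN, rfl⟩

theorem IsLindelof.exists_seq_isOpen_disjoint_iInter_closure [T2Space X] {K : Set X}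
    (hK : IsLindelof K) {y : X} (hy : y ∉ K) :
    ∃ A : ℕ → Set X, (∀ n, IsOpen (A n) ∧ y ∈ A n) ∧ Disjoint K (⋂ n, closure (A n)) := by
  have hsep : ∀ z ∈ K, ∃ A B : Set X, IsOpen A ∧ IsOpen B ∧ y ∈ A ∧ z ∈ B ∧ Disjoint A B :=
    fun z hz => t2_separation (ne_of_mem_of_not_mem hz hy).symm
  choose! A B hA hB hyA hzB hAB using hsep
  obtain ⟨t, htc, htK, hKt⟩ :=
    hK.elim_nhds_subcover B fun z hz => (hB z hz).mem_nhds (hzB z hz)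
  rcases t.eq_empty_or_nonempty with rfl | htne
  · refine ⟨fun _ => univ, fun _ => ⟨isOpen_univ, mem_univ y⟩, ?_⟩
    simpa using hKt
  obtain ⟨f, rfl⟩ := htc.exists_eq_range htne
  have hfK : ∀ n, f n ∈ K := fun n => htK _ ⟨n, rfl⟩
  refine ⟨A ∘ f, fun n => ⟨hA _ (hfK n), hyA _ (hfK n)⟩, disjoint_left.2 fun w hwK hwA => ?_⟩
  obtain ⟨_, ⟨n, rfl⟩, hwB⟩ := mem_iUnion₂.1 (hKt hwK)
  exact ((hAB _ (hfK n)).closure_left (hB _ (hfK n))).ne_of_mem (mem_iInter.1 hwA n) hwB rfl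

def iInterClosureTraces (D L : Set X) : Set (Set L) :=
  range fun S : ℕ → Set D => ((↑) : L → X) ⁻¹' ⋂ n, closure (((↑) : D → X) '' S n)

theorem isNetwork_iInterClosureTraces [T2Space X] {D L : Set X} (hD : Dense D)
    (hL : IsLindelof L) : IsNetwork (iInterClosureTraces D L) := by
  intro y U hU hyU
  obtain ⟨V, hV, rfl⟩ := isOpen_induced_iff.1 hU
  obtain ⟨A, hA, hKA⟩ :=
    (hL.diff hV).exists_seq_isOpen_disjoint_iInter_closure fun h => h.2 hyU
  refine ⟨_, ⟨fun n => (↑) ⁻¹' A n, rfl⟩, ?_, fun w hw => ?_⟩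
  · refine mem_iInter.2 fun n => ?_
    rw [Subtype.image_preimage_coe, inter_comm]
    exact hD.open_subset_closure_inter (hA n).1 (hA n).2
  · by_contra hwV
    refine hKA.ne_of_mem ⟨w.2, hwV⟩ (mem_iInter.2 fun n => ?_) rfl
    exact closure_mono (image_preimage_subset _ _) (mem_iInter.1 hw n)

end

theorem mk_nat_fun_set_le_continuum {α : Type u} [Countable α] : #(ℕ → Set α) ≤ 𝔠 :=
  calc #(ℕ → Set α) = 2 ^ #(ℕ × α) :=
        (mk_congr (Equiv.curry ℕ α Prop)).symm.trans mk_set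
    _ ≤ 2 ^ ℵ₀ := power_le_power_left two_ne_zero mk_le_aleph0
    _ = 𝔠 := two_power_aleph0

/-- A Lindelöf subspace of a separable Hausdorff space has network weight at most
the continuum. -/
theorem networkWeight_le_continuum_of_lindelof (X : Type u) [TopologicalSpace X]
    [T2Space X] [SeparableSpace X] (L : Set X) (hL : IsLindelof L) :
    networkWeight L ≤ Cardinal.continuum := by
  obtain ⟨D, hDc, hD⟩ := exists_countable_dense X
  have := hDc.to_subtype
  calc networkWeight L ≤ #(iInterClosureTraces D L) :=
        networkWeight_le_mk (isNetwork_iInterClosureTraces hD hL)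
    _ ≤ #(ℕ → Set D) := mk_range_le
    _ ≤ 𝔠 := mk_nat_fun_set_le_continuum
end

section
/- Every compact subspace K of a separable Hausdorff space satisfies w(K) ≤ 𝔠, where w denotes topological weight and 𝔠 the cardinality of the continuum. -/
/-!
Let `D` be a countable dense subset of `X`. Inside a compact `K`, a point `x` and the compact set
`K \ U` are separated by disjoint open sets `V ∋ x` and `W ⊇ K \ U`, so `K \ closure W` is a
neighbourhood of `x` in `K` contained in `U`. Since `closure W = closure (W ∩ D)`, the traces on `K`
of the complements of the sets `closure S`, `S ⊆ D`, form a base of `K`, and there are at most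
`2 ^ ℵ₀ = 𝔠` of them.
-/

open Cardinal TopologicalSpace

theorem Set.Countable.mk_powerset_le_continuum_s5 {α : Type u} {s : Set α} (hs : s.Countable) :
    #(𝒫 s) ≤ 𝔠 := by
  rw [mk_powerset, ← two_power_aleph0]
  exact power_le_power_left two_ne_zero (mk_le_aleph0_iff.mpr hs.to_subtype)

theorem Dense.closure_open_inter_eq {X : Type u} [TopologicalSpace X] {D W : Set X}
    (hD : Dense D) (hW : IsOpen W) : closure (W ∩ D) = closure W :=
  (closure_mono Set.inter_subset_left).antisymm
    (closure_minimal (hD.open_subset_closure_inter hW) isClosed_closure)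

section CompactSubspace

variable {X : Type u} [TopologicalSpace X] {K : Set X}

theorem IsCompact.isTopologicalBasis_preimage_compl_closure_of_isOpen [T2Space X]
    (hK : IsCompact K) :
    IsTopologicalBasis
      ((fun W : Set X ↦ ((↑) : K → X) ⁻¹' (closure W)ᶜ) '' {W | IsOpen W}) := by
  refine isTopologicalBasis_of_isOpen_of_nhds ?_ fun x u hxu hu ↦ ?_
  · rintro _ ⟨W, -, rfl⟩
    exact isClosed_closure.isOpen_compl.preimage continuous_subtype_val
  obtain ⟨U, hU, rfl⟩ := isOpen_induced_iff.mp hu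
  obtain ⟨W, V, hW, hV, hKUW, hxV, hWV⟩ :=
    (hK.diff hU).separation_of_notMem fun hx : (x : X) ∈ K \ U ↦ hx.2 hxu
  refine ⟨_, ⟨W, hW, rfl⟩, fun hx ↦ (hWV.symm.closure_right hV).notMem_of_mem_left hxV hx, ?_⟩
  intro y hy
  by_contra hyU
  exact hy (subset_closure (hKUW ⟨y.2, hyU⟩))

theorem Dense.isTopologicalBasis_preimage_compl_closure [T2Space X] {D : Set X} (hD : Dense D)
    (hK : IsCompact K) :
    IsTopologicalBasis ((fun S : Set X ↦ ((↑) : K → X) ⁻¹' (closure S)ᶜ) '' 𝒫 D) := by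
  refine hK.isTopologicalBasis_preimage_compl_closure_of_isOpen.of_isOpen_of_subset ?_ ?_
  · rintro _ ⟨S, -, rfl⟩
    exact isClosed_closure.isOpen_compl.preimage continuous_subtype_val
  · rintro _ ⟨W, hW, rfl⟩
    exact ⟨W ∩ D, Set.inter_subset_right, by simp only [hD.closure_open_inter_eq hW]⟩

end CompactSubspace

/-- Every compact subspace of a separable Hausdorff space has weight at most the continuum. -/
theorem weight_le_continuum_of_compact_subspace (X : Type u) [TopologicalSpace X]
    [T2Space X] [SeparableSpace X] (K : Set X) (hK : IsCompact K) :
    tweight K ≤ Cardinal.continuum := by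
  obtain ⟨D, hD, hDdense⟩ := exists_countable_dense X
  calc tweight K
      ≤ #((fun S : Set X ↦ ((↑) : K → X) ⁻¹' (closure S)ᶜ) '' 𝒫 D) :=
        tweight_le_mk_of_isTopologicalBasis (hDdense.isTopologicalBasis_preimage_compl_closure hK)
    _ ≤ #(𝒫 D) := mk_image_le
    _ ≤ 𝔠 := hD.mk_powerset_le_continuum_s5
end

section
/- If a compact Hausdorff topological group G is homeomorphic to a subspace of a separable Hausdorff space, then G is separable. -/
/-!
Let `e : ℕ → X` be dense. Sending an ultrafilter `p` on `ℕ` to the limit of `e` along `p`,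
whenever that limit lies in the copy of `G`, maps a closed subset `F ⊆ βℕ` continuously onto
`G`. It then suffices to extend this map to all of `βℕ`, since `βℕ` is separable.

`βℕ` is projective, and maps from closed subsets of a projective compactum `Z` into a compact
group `G` extend (compact groups are Dugundji spaces). By Zorn's lemma there is a minimal closed
`C ⊆ Z × G` containing the graph of the map whose fibres are the cosets of a closed subgroup `N`.
If `1 ≠ n ∈ N`, choose a continuous `φ : G → ℝ` with `φ n ≠ φ 1`; its right periods form a
closed subgroup `H ∌ n`, and `a ↦ (x ↦ φ (x * a))` maps `G` continuously into the metric space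
`C(G, ℝ)` with fibres inside left cosets of `H`. Maps into metric compacta extend from `F` to `Z` (Tietze, then a projective
choice of minimisers), which refines `C` to fibres that are cosets of `N ⊓ H`, contradicting
minimality. So the fibres of `C` are points and `C` is the graph of the extension.
-/

open Set Function Filter Topology

universe u v

theorem Ultrafilter.projective (α : Type u) : CompactT2.Projective (Ultrafilter α) := by
  intro Y W _ _ _ _ _ _ f g hf hg hg_surj
  choose s hs using hg_surj
  refine ⟨Ultrafilter.extend (s ∘ f ∘ pure), continuous_ultrafilter_extend _,
    denseRange_pure.equalizer (hg.comp (continuous_ultrafilter_extend _)) hf ?_⟩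
  funext a
  simp [ultrafilter_extend_pure, hs]

namespace CompactT2.Projective

variable {Z : Type u} [TopologicalSpace Z] [CompactSpace Z] [T2Space Z]

theorem exists_continuous_forall_mem (hZ : CompactT2.Projective Z) {Y : Type u}
    [TopologicalSpace Y] [CompactSpace Y] [T2Space Y] {C : Set (Z × Y)} (hC : IsClosed C)
    (hne : ∀ z, ∃ y, (z, y) ∈ C) : ∃ σ : Z → Y, Continuous σ ∧ ∀ z, (z, σ z) ∈ C := by
  have : CompactSpace C := isCompact_iff_compactSpace.mp hC.isCompact
  obtain ⟨s, hs, hfst⟩ := hZ continuous_id (continuous_fst.comp continuous_subtype_val)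
    fun z => ⟨⟨(z, _), (hne z).choose_spec⟩, rfl⟩
  refine ⟨fun z => (s z).1.2, continuous_snd.comp (continuous_subtype_val.comp hs), fun z => ?_⟩
  convert (s z).2
  exact (congrFun hfst z).symm

theorem exists_continuous_extension_of_metricSpace (hZ : CompactT2.Projective Z) {L : Type u}
    [MetricSpace L] [CompactSpace L] [Nonempty L] {F : Set Z} (hF : IsClosed F) {γ : F → L}
    (hγ : Continuous γ) : ∃ g : Z → L, Continuous g ∧ ∀ x : F, g x = γ x := by
  obtain ⟨D, hD⟩ := ContinuousMap.exists_restrict_eq (hF.prod isClosed_univ)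
    ⟨fun p : F ×ˢ (univ : Set L) => dist (γ ⟨p.1.1, p.2.1⟩) p.1.2, by fun_prop⟩
  have hDF (x : F) (l : L) : D ((x : Z), l) = dist (γ x) l :=
    congrArg (· ⟨((x : Z), l), x.2, trivial⟩) hD
  have hmin_closed : IsClosed {q : Z × L | ∀ l, D q ≤ D (q.1, l)} := by
    simp only [ofPred_forall]
    exact isClosed_iInter fun l => isClosed_le D.continuous (D.continuous.comp (by fun_prop))
  obtain ⟨g, hg, hmin⟩ := hZ.exists_continuous_forall_mem hmin_closed fun z =>
    (isCompact_univ.exists_isMinOn univ_nonempty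
      (D.continuous.comp (Continuous.prodMk_right z)).continuousOn).imp
      fun _ h l => h.2 (mem_univ l)
  refine ⟨g, hg, fun x => dist_le_zero.mp ?_⟩
  have := hmin x (γ x)
  simp only [hDF, dist_self] at this
  rwa [dist_comm]

theorem exists_continuous_extension_along (hZ : CompactT2.Projective Z) {K M : Type u}
    [TopologicalSpace K] [CompactSpace K] [T2Space K] [Nonempty K] [MetricSpace M] {Φ : K → M}
    (hΦ : Continuous Φ) {F : Set Z} (hF : IsClosed F) {γ : F → K} (hγ : Continuous γ) :
    ∃ τ : Z → K, Continuous τ ∧ ∀ x : F, Φ (τ x) = Φ (γ x) := by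
  have : CompactSpace (range Φ) := isCompact_iff_compactSpace.mp (isCompact_range hΦ)
  obtain ⟨h, hh, hhF⟩ := hZ.exists_continuous_extension_of_metricSpace hF
    (γ := rangeFactorization Φ ∘ γ) (hΦ.rangeFactorization.comp hγ)
  obtain ⟨τ, hτ, hτh⟩ := hZ hh hΦ.rangeFactorization rangeFactorization_surjective
  exact ⟨τ, hτ, fun x => congrArg Subtype.val ((congrFun hτh x).trans (hhF x))⟩

end CompactT2.Projective

section CompactGroup

variable {G : Type u} [Group G]

def rightPeriods {β : Type*} (f : G → β) : Subgroup G where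
  carrier := {x | ∀ a, f (a * x) = f a}
  one_mem' a := by rw [mul_one]
  mul_mem' {x y} hx hy a := by rw [← mul_assoc, hy, hx]
  inv_mem' {x} hx a := by rw [← hx (a * x⁻¹), inv_mul_cancel_right]

theorem inv_mul_mem_rightPeriods {β : Type*} {f : G → β} {a b : G}
    (h : ∀ x, f (x * a) = f (x * b)) : a⁻¹ * b ∈ rightPeriods f := fun x => by
  simpa [mul_assoc] using (h (x * a⁻¹)).symm

variable [TopologicalSpace G]

theorem isClosed_rightPeriods [ContinuousMul G] {β : Type*} [TopologicalSpace β] [T2Space β]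
    {f : G → β} (hf : Continuous f) : IsClosed (rightPeriods f : Set G) := by
  change IsClosed {x | ∀ a, f (a * x) = f a}
  simp only [ofPred_forall]
  exact isClosed_iInter fun a => isClosed_eq (by fun_prop) continuous_const

variable {Z : Type u} [TopologicalSpace Z]

/-- `C` is the graph of a continuous map `Z → G ⧸ N` extending `f` modulo `N`, each coset being
recorded as a fibre `{b | (z, b) ∈ C}`. -/
structure IsCosetLift (F : Set Z) (f : F → G) (N : Subgroup G) (C : Set (Z × G)) : Prop where
  isClosed_subgroup : IsClosed (N : Set G)
  isClosed : IsClosed C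
  graph_subset : ∀ x : F, ((x : Z), f x) ∈ C
  fiber : ∀ z, ∃ a, ∀ b, (z, b) ∈ C ↔ a⁻¹ * b ∈ N

variable {F : Set Z} {f : F → G} {N : Subgroup G} {C : Set (Z × G)}

theorem IsCosetLift.mem_iff (hC : IsCosetLift F f N C) {z : Z} {a : G} (ha : (z, a) ∈ C)
    (b : G) : (z, b) ∈ C ↔ a⁻¹ * b ∈ N := by
  obtain ⟨c, hc⟩ := hC.fiber z
  rw [hc, show c⁻¹ * b = c⁻¹ * a * (a⁻¹ * b) by group]
  exact Subgroup.mul_mem_cancel_left _ ((hc a).1 ha)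

theorem IsCosetLift.exists_mem (hC : IsCosetLift F f N C) (z : Z) : ∃ a, (z, a) ∈ C :=
  (hC.fiber z).imp fun a ha => (ha a).2 (by simp)

theorem isCosetLift_univ : IsCosetLift F f ⊤ univ :=
  ⟨by simp, isClosed_univ, fun _ => trivial, fun _ => ⟨1, fun _ => by simp⟩⟩

theorem isCosetLift_sInter [CompactSpace G] {c : Set (Set (Z × G))} (hc : IsChain (· ⊆ ·) c)
    (hne : c.Nonempty) (h : ∀ C ∈ c, ∃ N, IsCosetLift F f N C) :
    ∃ N, IsCosetLift F f N (⋂₀ c) := by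
  choose! N hN using h
  have : Nonempty c := hne.to_subtype
  refine ⟨⨅ C : c, N C, ?_, isClosed_sInter fun C hC => (hN C hC).isClosed,
    fun x => mem_sInter.2 fun C hC => (hN C hC).graph_subset x, fun z => ?_⟩
  · rw [Subgroup.coe_iInf]
    exact isClosed_iInter fun C => (hN C C.2).isClosed_subgroup
  have hclosed (C : c) : IsClosed {b | (z, b) ∈ (C : Set (Z × G))} :=
    (hN C C.2).isClosed.preimage (Continuous.prodMk_right z)
  obtain ⟨a, ha⟩ := IsCompact.nonempty_iInter_of_directed_nonempty_isCompact_isClosed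
    (fun C : c => {b | (z, b) ∈ (C : Set (Z × G))})
    (((show IsChain (· ⊇ ·) c from hc.symm).directedOn.directed_val).mono_comp _
      (g := fun C => {b | (z, b) ∈ C}) fun _ _ h _ hb => h hb)
    (fun C => (hN C C.2).exists_mem z)
    (fun C => (hclosed C).isCompact) hclosed
  rw [mem_iInter] at ha
  refine ⟨a, fun b => ?_⟩
  simp only [mem_sInter, Subgroup.mem_iInf, Subtype.forall]
  exact forall₂_congr fun C hC => (hN C hC).mem_iff (ha ⟨C, hC⟩) b

variable [IsTopologicalGroup G] [CompactSpace G] [T2Space G] [CompactSpace Z] [T2Space Z]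

theorem IsCosetLift.exists_subset_inf (hZ : CompactT2.Projective Z) (hF : IsClosed F)
    (hf : Continuous f) (hC : IsCosetLift F f N C) {H : Subgroup G} (hH : IsClosed (H : Set G))
    {M : Type u} [MetricSpace M] {Φ : G → M} (hΦ : Continuous Φ)
    (hΦH : ∀ a b, Φ a = Φ b → a⁻¹ * b ∈ H) : ∃ C' ⊆ C, IsCosetLift F f (N ⊓ H) C' := by
  obtain ⟨σ, hσ, hσC⟩ := hZ.exists_continuous_forall_mem hC.isClosed hC.exists_mem
  -- `σ` identifies `C` with `Z × N`; the refined fibres are the cosets `σ z * τ z * (N ⊓ H)`.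
  have : CompactSpace N := isCompact_iff_compactSpace.mp hC.isClosed_subgroup.isCompact
  let γ : F → N := fun x => ⟨(σ x)⁻¹ * f x, (hC.mem_iff (hσC x) _).1 (hC.graph_subset x)⟩
  obtain ⟨τ, hτ, hτF⟩ := hZ.exists_continuous_extension_along (hΦ.comp continuous_subtype_val)
    hF (γ := γ) (by fun_prop)
  have hNH : IsClosed ((N ⊓ H : Subgroup G) : Set G) := hC.isClosed_subgroup.inter hH
  refine ⟨{q | (σ q.1 * τ q.1)⁻¹ * q.2 ∈ N ⊓ H}, fun q hq => ?_,
    hNH, hNH.preimage (by fun_prop), fun x => ?_, fun z => ⟨σ z * τ z, fun b => Iff.rfl⟩⟩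
  · rw [← Prod.mk.eta (p := q), hC.mem_iff (hσC q.1),
      show (σ q.1)⁻¹ * q.2 = τ q.1 * ((σ q.1 * τ q.1)⁻¹ * q.2) by group]
    exact N.mul_mem (τ q.1).2 hq.1
  · rw [mem_ofPred_eq, show (σ x * τ x)⁻¹ * f x = (τ x : G)⁻¹ * γ x by simp [γ, mul_assoc]]
    exact ⟨N.mul_mem (N.inv_mem (τ x).2) (γ x).2, hΦH _ _ (hτF x)⟩

theorem IsCosetLift.eq_of_minimal (hZ : CompactT2.Projective Z)
    (hF : IsClosed F) (hf : Continuous f) (hC : IsCosetLift F f N C)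
    (hmin : Minimal (fun C => ∃ N, IsCosetLift F f N C) C) {z : Z} {a b : G}
    (ha : (z, a) ∈ C) (hb : (z, b) ∈ C) : a = b := by
  by_contra hab
  obtain ⟨φ, hφa, hφb, -⟩ := exists_continuous_zero_one_of_isClosed isClosed_singleton
    isClosed_singleton (disjoint_singleton.2 (inv_mul_eq_one.not.2 hab))
  obtain ⟨C', hC'C, hC'⟩ := hC.exists_subset_inf hZ hF hf
    (isClosed_rightPeriods φ.continuous) (ContinuousMap.curry ⟨fun p : G × G => φ (p.2 * p.1),
      by fun_prop⟩).continuous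
    fun a b h => inv_mul_mem_rightPeriods fun x => DFunLike.congr_fun h x
  have hCC' := hmin.2 ⟨_, hC'⟩ hC'C
  have := ((hC'.mem_iff (hCC' ha) b).1 (hCC' hb)).2 1
  simp [hφa rfl, hφb rfl] at this

theorem CompactT2.Projective.exists_continuous_extension_of_compactGroup
    (hZ : CompactT2.Projective Z) (hF : IsClosed F) (hf : Continuous f) :
    ∃ g : Z → G, Continuous g ∧ ∀ x : F, g x = f x := by
  obtain ⟨C, -, hmin⟩ := zorn_superset_nonempty {C | ∃ N, IsCosetLift F f N C}
    (fun c hcS hc hne => ⟨_, isCosetLift_sInter hc hne hcS, fun _ => sInter_subset_of_mem⟩)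
    univ ⟨⊤, isCosetLift_univ⟩
  obtain ⟨N, hC⟩ := hmin.1
  obtain ⟨g, hg, hgC⟩ := hZ.exists_continuous_forall_mem hC.isClosed hC.exists_mem
  exact ⟨g, hg, fun x => hC.eq_of_minimal hZ hF hf hmin (hgC x) (hC.graph_subset x)⟩

end CompactGroup

theorem exists_ultrafilter_tendsto_of_denseRange {α X : Type*} [TopologicalSpace X] {e : α → X}
    (he : DenseRange e) (x : X) : ∃ p : Ultrafilter α, Tendsto e p (𝓝 x) := by
  have : (comap e (𝓝 x)).NeBot := comap_neBot fun t ht => by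
    obtain ⟨_, hy, a, rfl⟩ := mem_closure_iff_nhds.1 (he x) t ht
    exact ⟨a, hy⟩
  exact ⟨Ultrafilter.of (comap e (𝓝 x)), tendsto_iff_comap.2 (Ultrafilter.of_le _)⟩

theorem continuous_of_isClosed_graph {X Y : Type*} [TopologicalSpace X] [TopologicalSpace Y]
    [CompactSpace Y] {f : X → Y} (hf : IsClosed {q : X × Y | f q.1 = q.2}) : Continuous f := by
  refine continuous_iff_isClosed.2 fun S hS => ?_
  convert isClosedMap_fst_of_compactSpace _ (hf.inter (isClosed_univ.prod hS))
  ext x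
  simp

theorem isClosed_setOf_tendsto_ultrafilter {α K X : Type*} [TopologicalSpace K]
    [TopologicalSpace X] (e : α → X) {φ : K → X} (hφ : Continuous φ) :
    IsClosed {q : Ultrafilter α × K | Tendsto e q.1 (𝓝 (φ q.2))} := by
  have : {q : Ultrafilter α × K | Tendsto e q.1 (𝓝 (φ q.2))} =
      ⋂ (U : Set X) (_ : IsOpen U), {q | φ q.2 ∈ U → e ⁻¹' U ∈ q.1} := by
    ext q
    simp [tendsto_nhds]
  rw [this]
  refine isClosed_iInter fun U => isClosed_iInter fun hU => ?_
  simp only [imp_iff_not_or, ofPred_or]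
  exact (hU.isClosed_compl.preimage (hφ.comp continuous_snd)).union
    ((ultrafilter_isClosed_basic _).preimage continuous_fst)

theorem Ultrafilter.exists_isClosed_continuous_surjective {α K X : Type*}
    [TopologicalSpace K] [CompactSpace K] [TopologicalSpace X] [T2Space X] {e : α → X}
    (he : DenseRange e) {φ : K → X} (hφ : Continuous φ) (hφ_inj : Injective φ) :
    ∃ F : Set (Ultrafilter α), IsClosed F ∧
      ∃ f : F → K, Continuous f ∧ Surjective f := by
  set R : Set (Ultrafilter α × K) := {q | Tendsto e q.1 (𝓝 (φ q.2))}
  have hR : IsClosed R := isClosed_setOf_tendsto_ultrafilter e hφ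
  have hR_unique {p : Ultrafilter α} {k k' : K} (hk : (p, k) ∈ R) (hk' : (p, k') ∈ R) : k = k' :=
    hφ_inj (tendsto_nhds_unique hk hk')
  have hF : ∀ x : Prod.fst '' R, ∃ k, ((x : Ultrafilter α), k) ∈ R := by
    rintro ⟨_, ⟨p, k⟩, hpk, rfl⟩
    exact ⟨k, hpk⟩
  choose f hfR using hF
  refine ⟨_, isClosedMap_fst_of_compactSpace _ hR, f, continuous_of_isClosed_graph ?_, fun k => ?_⟩
  · convert hR.preimage (continuous_subtype_val.prodMap continuous_id)
    ext ⟨x, k⟩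
    exact ⟨fun (h : f x = k) => h ▸ hfR x, hR_unique (hfR x)⟩
  · obtain ⟨p, hp⟩ := exists_ultrafilter_tendsto_of_denseRange he (φ k)
    exact ⟨⟨p, ⟨(p, k), hp, rfl⟩⟩, hR_unique (hfR _) hp⟩

open TopologicalSpace

/-- If a compact Hausdorff topological group is homeomorphic to a subspace of a
separable Hausdorff space, then it is separable. -/
theorem separable_of_compactGroup_embeds (G : Type u) [Group G] [TopologicalSpace G]
    [IsTopologicalGroup G] [CompactSpace G] [T2Space G]
    (X : Type v) [TopologicalSpace X] [T2Space X] [SeparableSpace X]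
    (s : Set X) (h : Nonempty (G ≃ₜ s)) : SeparableSpace G := by
  obtain ⟨φ⟩ := h
  have : Nonempty X := ⟨φ 1⟩
  obtain ⟨e, he⟩ := exists_dense_seq X
  -- `ULift` puts `βℕ` in the universe of `G`, the only one `CompactT2.Projective` speaks about.
  have he' : DenseRange (e ∘ ULift.down.{u}) := by
    rwa [DenseRange, ULift.down_surjective.range_comp]
  obtain ⟨F, hF, f, hf, hf_surj⟩ := Ultrafilter.exists_isClosed_continuous_surjective he'
    (continuous_subtype_val.comp φ.continuous) (Subtype.val_injective.comp φ.injective)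
  obtain ⟨g, hg, hgf⟩ := CompactT2.Projective.exists_continuous_extension_of_compactGroup
    (Ultrafilter.projective _) hF hf
  have : SeparableSpace (Ultrafilter (ULift.{u} ℕ)) := .of_denseRange pure denseRange_pure
  refine DenseRange.separableSpace (Surjective.denseRange fun k => ?_) hg
  obtain ⟨x, rfl⟩ := hf_surj k
  exact ⟨x, hgf x⟩
end

section
/- A topological group G is separable whenever it contains a closed subgroup H such that both H and the quotient space G/H are separable; in particular, separability is a three-space property for topological groups. -/
open TopologicalSpace

/-!
A nonempty open `U ⊆ G` projects to an open set of `G ⧸ H` (the projection is open), which meets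
a countable dense set of cosets in some `q`. Then `U` meets the coset `q.out • H` in a relatively
open set, which a countable dense subset of `H` translated by `q.out` meets as well.
-/

theorem Dense.image2_out_mul {G : Type*} [Group G] [TopologicalSpace G]
    [SeparatelyContinuousMul G] {H : Subgroup G} {Q : Set (G ⧸ H)} {S : Set H}
    (hQ : Dense Q) (hS : Dense S) :
    Dense (Set.image2 (fun (q : G ⧸ H) (s : H) => q.out * (s : G)) Q S) := by
  refine dense_iff_inter_open.2 fun U hU ⟨x, hx⟩ => ?_
  obtain ⟨q, hqQ, u, huU, huq⟩ := hQ.exists_mem_open (QuotientGroup.isOpenMap_coe U hU)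
    ⟨_, x, hx, rfl⟩
  have hout : q.out⁻¹ * u ∈ H := QuotientGroup.eq.mp (by rw [QuotientGroup.out_eq', huq])
  have hW : IsOpen {h : H | q.out * (h : G) ∈ U} :=
    (continuous_const_mul _ |>.comp continuous_subtype_val).isOpen_preimage U hU
  obtain ⟨s, hsS, hsU⟩ := hS.exists_mem_open hW ⟨⟨_, hout⟩, by simpa using huU⟩
  exact ⟨_, hsU, Set.mem_image2_of_mem hqQ hsS⟩

theorem separable_of_subgroup_and_quotient_separable_general (G : Type u) [Group G]
    [TopologicalSpace G] [IsTopologicalGroup G] (H : Subgroup G)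
    (hH : SeparableSpace H)
    (hq : SeparableSpace (G ⧸ H)) : SeparableSpace G := by
  obtain ⟨S, hSc, hSd⟩ := exists_countable_dense H
  obtain ⟨Q, hQc, hQd⟩ := exists_countable_dense (G ⧸ H)
  exact ⟨⟨_, hQc.image2 hSc _, hQd.image2_out_mul hSd⟩⟩

/-- If a topological group `G` has a closed subgroup `H` such that both `H` and the
left coset space `G/H` are separable, then `G` is separable. -/
theorem separable_of_subgroup_and_quotient_separable (G : Type u) [Group G]
    [TopologicalSpace G] [IsTopologicalGroup G] (H : Subgroup G)
    (hclosed : IsClosed (H : Set G)) (hH : SeparableSpace H)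
    (hq : SeparableSpace (G ⧸ H)) : SeparableSpace G :=
  separable_of_subgroup_and_quotient_separable_general G H hH hq
end

section
/- Every Hausdorff topological group of countable cellularity is ω-narrow. -/
open Topology Pointwise

/-- A topological group is ω-narrow if it is covered by countably many translates of
every neighborhood of the identity. -/
def OmegaNarrow (G : Type u) [Group G] [TopologicalSpace G] : Prop :=
  ∀ U ∈ 𝓝 (1 : G), ∃ C : Set G, C.Countable ∧ Set.univ ⊆ C * U

/-- A space has countable cellularity if every pairwise disjoint family of nonempty
open sets is countable. -/
def CountableCellularity (X : Type u) [TopologicalSpace X] : Prop :=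
  ∀ S : Set (Set X), (∀ U ∈ S, IsOpen U ∧ U.Nonempty) → S.PairwiseDisjoint id → S.Countable

/-! Take an open `V ∋ 1` with `V * V⁻¹ ⊆ U` and, by Zorn, a maximal set `A` whose translates
`a • V` are pairwise disjoint. Countable cellularity makes `A` countable, and maximality means
every `g • V` meets some `a • V`, i.e. `g ∈ a * (V * V⁻¹) ⊆ A * U`. -/

open Set

theorem Set.exists_maximal_pairwiseDisjoint {ι α : Type*} [PartialOrder α] [OrderBot α]
    (f : ι → α) : ∃ s : Set ι, Maximal (fun s => s.PairwiseDisjoint f) s :=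
  zorn_subset _ fun c hc hchain =>
    ⟨⋃₀ c, (pairwiseDisjoint_sUnion hchain.directedOn).2 hc, fun _ => subset_sUnion_of_mem⟩

theorem Set.PairwiseDisjoint.injOn_of_nonempty {ι α : Type*} {s : Set ι} {f : ι → Set α}
    (hd : s.PairwiseDisjoint f) (hne : ∀ i ∈ s, (f i).Nonempty) : s.InjOn f := by
  intro i hi j hj hij
  by_contra hij_ne
  have hdisj : Disjoint (f i) (f j) := hd hi hj hij_ne
  rw [hij, disjoint_self] at hdisj
  exact (hne j hj).ne_empty hdisj

theorem CountableCellularity.countable_of_pairwiseDisjoint {X : Type u} [TopologicalSpace X]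
    (h : CountableCellularity X) {ι : Type*} {s : Set ι} {f : ι → Set X}
    (hopen : ∀ i ∈ s, IsOpen (f i)) (hne : ∀ i ∈ s, (f i).Nonempty)
    (hd : s.PairwiseDisjoint f) : s.Countable := by
  have hinj := hd.injOn_of_nonempty hne
  refine countable_of_injective_of_countable_image hinj (h _ ?_ (hinj.pairwiseDisjoint_image.2 hd))
  rintro _ ⟨i, hi, rfl⟩
  exact ⟨hopen i hi, hne i hi⟩

theorem univ_subset_mul_mul_inv_of_maximal_pairwiseDisjoint_smul {G : Type*} [Group G]
    {V A : Set G} (hV : V.Nonempty) (hA : Maximal (fun A => A.PairwiseDisjoint (· • V)) A) :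
    univ ⊆ A * (V * V⁻¹) := by
  intro g _
  by_cases hg : g ∈ A
  · obtain ⟨v, hv⟩ := hV
    exact ⟨g, hg, v * v⁻¹, mul_mem_mul hv (inv_mem_inv.2 hv), by simp⟩
  · have hmeet : ∃ a ∈ A, ¬Disjoint (g • V) (a • V) := by
      by_contra! hdisj
      exact hg (hA.mem_of_prop_insert (hA.prop.insert fun a ha _ => hdisj a ha))
    obtain ⟨a, ha, hnd⟩ := hmeet
    obtain ⟨_, ⟨v, hv, rfl⟩, w, hw, hwv⟩ := not_disjoint_iff.1 hnd
    refine ⟨a, ha, w * v⁻¹, mul_mem_mul hw (inv_mem_inv.2 hv), ?_⟩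
    simp only [smul_eq_mul] at hwv
    show a * (w * v⁻¹) = g
    rw [← mul_assoc, hwv, mul_inv_cancel_right]

theorem exists_isOpen_one_mem_mul_inv_subset {G : Type*} [Group G] [TopologicalSpace G]
    [IsTopologicalGroup G] {U : Set G} (hU : U ∈ 𝓝 1) :
    ∃ V : Set G, IsOpen V ∧ (1 : G) ∈ V ∧ V * V⁻¹ ⊆ U := by
  obtain ⟨W, hWo, hW1, hWU⟩ := exists_open_nhds_one_mul_subset hU
  refine ⟨W ∩ W⁻¹, hWo.inter hWo.inv, ⟨hW1, by simpa using hW1⟩, ?_⟩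
  calc W ∩ W⁻¹ * (W ∩ W⁻¹)⁻¹ ⊆ W * W := by
        rw [inter_inv, inv_inv]
        exact mul_subset_mul inter_subset_left inter_subset_right
    _ ⊆ U := hWU

theorem omegaNarrow_of_countableCellularity_general (G : Type u) [Group G] [TopologicalSpace G]
    [IsTopologicalGroup G] (h : CountableCellularity G) : OmegaNarrow G := by
  intro U hU
  obtain ⟨V, hVo, hV1, hVU⟩ := exists_isOpen_one_mem_mul_inv_subset hU
  have hV : V.Nonempty := ⟨1, hV1⟩
  obtain ⟨A, hA⟩ := exists_maximal_pairwiseDisjoint fun a : G => a • V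
  refine ⟨A, h.countable_of_pairwiseDisjoint (fun a _ => hVo.smul a) (fun _ _ => hV.smul_set)
    hA.prop, ?_⟩
  exact (univ_subset_mul_mul_inv_of_maximal_pairwiseDisjoint_smul hV hA).trans
    (mul_subset_mul_left hVU)

/-- Every Hausdorff topological group of countable cellularity is ω-narrow. -/
theorem omegaNarrow_of_countableCellularity (G : Type u) [Group G] [TopologicalSpace G]
    [IsTopologicalGroup G] [T2Space G] (h : CountableCellularity G) : OmegaNarrow G :=
  omegaNarrow_of_countableCellularity_general G h
end

section
/- Every subgroup of an ω-narrow topological group is ω-narrow. -/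
/-! A countable cover of a subgroup `H` by translates `c W` is replaced by one with centres in `H`:
from every translate meeting `H` pick a point `d` of `H`; then that translate lies in `d W⁻¹ W`.
Choosing `W⁻¹ W` inside the given neighbourhood makes the new cover fine enough. -/

open Topology Pointwise

theorem exists_mem_nhds_one_inv_mul_subset {G : Type*} [Group G] [TopologicalSpace G]
    [IsTopologicalGroup G] {V : Set G} (hV : V ∈ 𝓝 (1 : G)) :
    ∃ W ∈ 𝓝 (1 : G), W⁻¹ * W ⊆ V := by
  have hcont : Filter.Tendsto (fun p : G × G => p.1⁻¹ * p.2) (𝓝 1 ×ˢ 𝓝 1) (𝓝 1) := by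
    have hc : Continuous fun p : G × G => p.1⁻¹ * p.2 := continuous_fst.inv.mul continuous_snd
    simpa [nhds_prod_eq] using hc.tendsto (1, 1)
  obtain ⟨W, hW, hWW⟩ := Filter.mem_prod_self_iff.mp (hcont hV)
  refine ⟨W, hW, ?_⟩
  rintro _ ⟨v, hv, w, hw, rfl⟩
  simpa using hWW (Set.mk_mem_prod (Set.mem_inv.mp hv) hw)

theorem exists_countable_subset_cover_inv_mul {G : Type*} [Group G] {S C W : Set G}
    (hC : C.Countable) (hSC : S ⊆ C * W) :
    ∃ D ⊆ S, D.Countable ∧ S ⊆ D * (W⁻¹ * W) := by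
  have hpick : ∀ c : G, ∃ d : G, ∀ w ∈ W, c * w ∈ S → d ∈ S ∧ ∃ w' ∈ W, c * w' = d := by
    intro c
    by_cases h : ∃ w ∈ W, c * w ∈ S
    · obtain ⟨w, hw, hcw⟩ := h
      exact ⟨c * w, fun _ _ _ => ⟨hcw, w, hw, rfl⟩⟩
    · exact ⟨1, fun w hw hcw => absurd ⟨w, hw, hcw⟩ h⟩
  choose f hf using hpick
  refine ⟨S ∩ f '' C, Set.inter_subset_left, (hC.image f).mono Set.inter_subset_right, ?_⟩
  intro s hs
  obtain ⟨c, hc, w, hw, rfl⟩ := hSC hs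
  obtain ⟨hfS, w', hw', hcw'⟩ := hf c w hw hs
  refine ⟨f c, ⟨hfS, c, hc, rfl⟩, w'⁻¹ * w, ⟨w'⁻¹, by simpa using hw', w, hw, rfl⟩, ?_⟩
  rw [← hcw']
  group

theorem Subgroup.univ_subset_preimage_mul_of_coe_subset_mul {G : Type*} [Group G]
    (H : Subgroup G) {D V : Set G} (hDH : D ⊆ H) (hHD : (H : Set G) ⊆ D * V) :
    (Set.univ : Set H) ⊆ (Subtype.val ⁻¹' D) * (Subtype.val ⁻¹' V) := by
  rintro h -
  obtain ⟨d, hd, v, hv, hdv⟩ := hHD h.2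
  have hdv : d * v = h := hdv
  have hvH : v ∈ H := (H.mul_mem_cancel_left (hDH hd)).mp (hdv ▸ h.2)
  exact ⟨⟨d, hDH hd⟩, hd, ⟨v, hvH⟩, hv, Subtype.ext hdv⟩

/-- Every subgroup of an ω-narrow topological group is ω-narrow. -/
theorem omegaNarrow_subgroup (G : Type u) [Group G] [TopologicalSpace G]
    [IsTopologicalGroup G] (hG : OmegaNarrow G) (H : Subgroup G) : OmegaNarrow H := by
  intro U hU
  obtain ⟨V, hV, hVU⟩ := (mem_nhds_induced Subtype.val 1 U).mp hU
  obtain ⟨W, hW, hWV⟩ := exists_mem_nhds_one_inv_mul_subset hV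
  obtain ⟨C, hC, hCW⟩ := hG W hW
  obtain ⟨D, hDH, hD, hHD⟩ :=
    exists_countable_subset_cover_inv_mul hC ((Set.subset_univ (H : Set G)).trans hCW)
  refine ⟨Subtype.val ⁻¹' D, hD.preimage Subtype.val_injective, ?_⟩
  exact (H.univ_subset_preimage_mul_of_coe_subset_mul hDH
    (hHD.trans (Set.mul_subset_mul_left hWV))).trans (Set.mul_subset_mul_left hVU)
end

section
/- If G is an ω-narrow topological group and N a closed subgroup such that the quotient space G/N is locally compact Hausdorff, then G/N is σ-compact. -/
open Topology Pointwise

/-!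
The image `K` in `G/N` of a compact neighbourhood of the base coset pulls back to a
neighbourhood of `1` in `G`, so ω-narrowness of `G` covers `G/N` by countably many
translates `c • K`, each of them compact.
-/

theorem SigmaCompactSpace.of_countable_smul_cover {G X : Type*} [SMul G X] [TopologicalSpace X]
    [ContinuousConstSMul G X] {K : Set X} (hK : IsCompact K) {C : Set G} (hC : C.Countable)
    (hcover : ⋃ c ∈ C, c • K = Set.univ) : SigmaCompactSpace X := by
  refine .of_countable ((· • K) '' C) (hC.image _) ?_ ?_
  · rintro _ ⟨c, -, rfl⟩
    exact hK.smul c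
  · rwa [Set.sUnion_image]

theorem OmegaNarrow.iUnion_smul_eq_univ_quotient {G : Type*} [Group G] [TopologicalSpace G]
    (hG : OmegaNarrow G) (N : Subgroup G) {K : Set (G ⧸ N)} (hK : K ∈ 𝓝 ((1 : G) : G ⧸ N)) :
    ∃ C : Set G, C.Countable ∧ ⋃ c ∈ C, c • K = Set.univ := by
  have hU : (QuotientGroup.mk ⁻¹' K : Set G) ∈ 𝓝 (1 : G) :=
    QuotientGroup.continuous_mk.continuousAt.preimage_mem_nhds hK
  obtain ⟨C, hC, hcover⟩ := hG _ hU
  refine ⟨C, hC, Set.eq_univ_of_forall fun x => ?_⟩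
  obtain ⟨g, rfl⟩ := QuotientGroup.mk_surjective x
  obtain ⟨c, hc, u, hu, rfl⟩ := hcover (Set.mem_univ g)
  exact Set.mem_biUnion hc ⟨u, hu, rfl⟩

theorem sigmaCompact_quotient_of_omegaNarrow_general (G : Type u) [Group G] [TopologicalSpace G]
    [IsTopologicalGroup G] (hG : OmegaNarrow G) (N : Subgroup G)
    (hlc : LocallyCompactSpace (G ⧸ N)) :
    SigmaCompactSpace (G ⧸ N) := by
  obtain ⟨K, hK, hKmem⟩ := exists_compact_mem_nhds ((1 : G) : G ⧸ N)
  obtain ⟨C, hC, hcover⟩ := hG.iUnion_smul_eq_univ_quotient N hKmem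
  exact .of_countable_smul_cover hK hC hcover

/-- If `G` is an ω-narrow topological group and `N` a closed subgroup such that the
left coset space `G/N` is locally compact Hausdorff, then `G/N` is σ-compact. -/
theorem sigmaCompact_quotient_of_omegaNarrow (G : Type u) [Group G] [TopologicalSpace G]
    [IsTopologicalGroup G] (hG : OmegaNarrow G) (N : Subgroup G)
    (hclosed : IsClosed (N : Set G))
    (hlc : LocallyCompactSpace (G ⧸ N)) (hT2 : T2Space (G ⧸ N)) :
    SigmaCompactSpace (G ⧸ N) :=
  sigmaCompact_quotient_of_omegaNarrow_general G hG N hlc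
end

section
/- If a metrizable topological group G is topologically isomorphic to a subgroup of a separable topological group, then G is separable. -/
/-!
A separable group is ω-narrow: countably many translates of any neighbourhood of `1` cover it.
This property passes to subgroups carrying the subspace topology, because a neighbourhood `W` with
`W⁻¹ * W` inside a given neighbourhood lets one replace each translate `c * W` meeting the subgroup by
a translate centred in the subgroup. In a first-countable ω-narrow group, choosing countably many
translates of each member of a countable neighbourhood base at `1` produces a countable dense set.
-/

open Set Filter Topology TopologicalSpace Pointwise

def IsOmegaNarrow (G : Type*) [Group G] [TopologicalSpace G] : Prop :=
  ∀ U ∈ 𝓝 (1 : G), ∃ C : Set G, C.Countable ∧ C * U = univ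

namespace IsOmegaNarrow

theorem of_separableSpace (X : Type*) [Group X] [TopologicalSpace X] [IsTopologicalGroup X]
    [SeparableSpace X] : IsOmegaNarrow X := by
  intro V hV
  obtain ⟨D, hD, hDense⟩ := exists_countable_dense X
  refine ⟨D, hD, eq_univ_of_forall fun x => ?_⟩
  have hxV : {y : X | y⁻¹ * x ∈ V} ∈ 𝓝 x :=
    (continuous_inv.mul continuous_const).continuousAt.preimage_mem_nhds (by simpa using hV)
  obtain ⟨d, hdD, hdx⟩ := hDense.inter_nhds_nonempty hxV
  exact ⟨d, hdD, d⁻¹ * x, hdx, mul_inv_cancel_left d x⟩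

theorem of_isInducing {G X : Type*} [Group G] [TopologicalSpace G] [Group X] [TopologicalSpace X]
    [IsTopologicalGroup X] (hX : IsOmegaNarrow X) (f : G →* X) (hf : Topology.IsInducing f) :
    IsOmegaNarrow G := by
  intro U hU
  rw [hf.nhds_eq_comap, map_one] at hU
  obtain ⟨V, hV, hVU⟩ := mem_comap.1 hU
  obtain ⟨W, hW, -, hWinv, hWW⟩ := exists_closed_nhds_one_inv_eq_mul_subset hV
  obtain ⟨C, hC, hCW⟩ := hX W hW
  have hrep : ∀ c : X, ∃ g : G, (∃ g' : G, ∃ w ∈ W, f g' = c * w) → ∃ w ∈ W, f g = c * w :=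
    fun c => by
      by_cases h : ∃ g' : G, ∃ w ∈ W, f g' = c * w
      · exact h.imp fun g hg _ => hg
      · exact ⟨1, fun h' => absurd h' h⟩
  choose s hs using hrep
  refine ⟨s '' C, hC.image s, eq_univ_of_forall fun g => ?_⟩
  obtain ⟨c, hc, w, hw, hfg⟩ : f g ∈ C * W := hCW ▸ mem_univ (f g)
  obtain ⟨w', hw', hfs⟩ := hs c ⟨g, w, hw, hfg.symm⟩
  have hmem : (s c)⁻¹ * g ∈ U := by
    apply hVU
    have : f ((s c)⁻¹ * g) = w'⁻¹ * w := by
      rw [map_mul, map_inv, hfs, ← hfg]; group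
    rw [mem_preimage, this]
    exact hWW (mul_mem_mul (hWinv ▸ inv_mem_inv.2 hw') hw)
  exact ⟨s c, mem_image_of_mem s hc, _, hmem, mul_inv_cancel_left (s c) g⟩

theorem separableSpace {G : Type*} [Group G] [TopologicalSpace G] [IsTopologicalGroup G]
    [FirstCountableTopology G] (hG : IsOmegaNarrow G) : SeparableSpace G := by
  obtain ⟨U, hU⟩ := (𝓝 (1 : G)).exists_antitone_basis
  choose C hC hCU using fun n => hG _ (inv_mem_nhds_one G (hU.mem n))
  refine ⟨⋃ n, C n, countable_iUnion hC, fun x => ?_⟩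
  have hbasis : (𝓝 x).HasBasis (fun _ => True) fun n => (x * ·) '' U n :=
    map_mul_left_nhds_one x ▸ hU.toHasBasis.map (x * ·)
  refine (mem_closure_iff_nhds_basis hbasis).2 fun n _ => ?_
  obtain ⟨c, hc, u, hu, rfl⟩ : x ∈ C n * (U n)⁻¹ := hCU n ▸ mem_univ x
  exact ⟨c, mem_iUnion_of_mem n hc, u⁻¹, hu, mul_inv_cancel_right c u⟩

end IsOmegaNarrow

theorem separable_of_metrizable_subgroup_general (G : Type u) [Group G] [TopologicalSpace G]
    [IsTopologicalGroup G] [MetrizableSpace G]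
    (X : Type v) [Group X] [TopologicalSpace X] [IsTopologicalGroup X] [SeparableSpace X]
    (f : G →* X) (hind : Topology.IsInducing f) :
    SeparableSpace G :=
  ((IsOmegaNarrow.of_separableSpace X).of_isInducing f hind).separableSpace

/-- If a metrizable topological group `G` is topologically isomorphic to a subgroup of a
separable topological group `X`, then `G` is separable. -/
theorem separable_of_metrizable_subgroup (G : Type u) [Group G] [TopologicalSpace G]
    [IsTopologicalGroup G] [MetrizableSpace G]
    (X : Type v) [Group X] [TopologicalSpace X] [IsTopologicalGroup X] [SeparableSpace X]
    (f : G →* X) (hinj : Function.Injective f) (hind : Topology.IsInducing f) :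
    SeparableSpace G :=
  separable_of_metrizable_subgroup_general G X f hind
end

section
/- Let K and L be subgroups of a topological abelian group G. If K is countably compact and L is ω-bounded, then the subgroup K + L is countably compact. -/
open Pointwise

/-- A topological space is countably compact if every countable open cover has a finite
subcover. -/
def CountablyCompact (X : Type u) [TopologicalSpace X] : Prop :=
  ∀ U : ℕ → Set X, (∀ n, IsOpen (U n)) → (⋃ n, U n) = Set.univ →
    ∃ F : Finset ℕ, (⋃ n ∈ F, U n) = Set.univ

/-- A topological (additive) group is ω-bounded if the closure of every countable subset
is compact. -/
def OmegaBounded (X : Type u) [TopologicalSpace X] : Prop :=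
  ∀ C : Set X, C.Countable → IsCompact (closure C)

/-!
A countable set `C ⊆ K + L` is covered by `K + B`, where `B` is the closure of the countably
many `L`-summands used to write the points of `C`. By ω-boundedness `B` is compact, and the sum
of a countably compact set and a compact set is countably compact, being the continuous image of
their product. Countable compactness only depends on countable subsets, so `K + L` inherits it.
-/

open Filter Topology Set

theorem isCountablyCompact_iff_countablyCompact {X : Type*} [TopologicalSpace X] {A : Set X} :
    IsCountablyCompact A ↔ CountablyCompact A := by
  rw [isCountablyCompact_iff_countablyCompactSpace, ← isCountablyCompact_univ_iff,
    isCountablyCompact_iff_countable_open_cover]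
  simp only [CountablyCompact, univ_subset_iff]

theorem IsCountablyCompact.prod {X Y : Type*} [TopologicalSpace X] [TopologicalSpace Y]
    {A : Set X} {B : Set Y} (hA : IsCountablyCompact A) (hB : IsCompact B) :
    IsCountablyCompact (A ×ˢ B) := by
  intro f _ _ hf
  have hfAB : A ×ˢ B ∈ f := le_principal_iff.1 hf
  obtain ⟨x, hxA, hx⟩ := hA (f := map Prod.fst f)
    (le_principal_iff.2 (mem_map.2 (mem_of_superset hfAB fun _ hp => hp.1)))
  have : NeBot (f ⊓ comap Prod.fst (𝓝 x)) := by
    refine NeBot.of_map (m := Prod.fst) ?_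
    rwa [Filter.push_pull, inf_comm]
  obtain ⟨y, hyB, hy⟩ := hB (f := map Prod.snd (f ⊓ comap Prod.fst (𝓝 x)))
    (le_principal_iff.2 (mem_map.2 (mem_inf_of_left (mem_of_superset hfAB fun _ hp => hp.2))))
  have hxy : NeBot (f ⊓ comap Prod.fst (𝓝 x) ⊓ comap Prod.snd (𝓝 y)) := by
    refine NeBot.of_map (m := Prod.snd) ?_
    rwa [Filter.push_pull, inf_comm]
  refine ⟨(x, y), ⟨hxA, hyB⟩, ?_⟩
  rwa [ClusterPt, nhds_prod_eq, Filter.prod_eq_inf, inf_comm, ← inf_assoc]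

@[to_additive]
theorem IsCountablyCompact.mul {M : Type*} [Mul M] [TopologicalSpace M] [ContinuousMul M]
    {A B : Set M} (hA : IsCountablyCompact A) (hB : IsCompact B) :
    IsCountablyCompact (A * B) := by
  rw [← image2_mul, ← image_prod]
  exact (hA.prod hB).image continuous_mul

theorem IsCountablyCompact.of_forall_countable_subset {X : Type*} [TopologicalSpace X]
    {A : Set X} (h : ∀ C ⊆ A, C.Countable → ∃ B, C ⊆ B ∧ B ⊆ A ∧ IsCountablyCompact B) :
    IsCountablyCompact A := by
  refine IsCountablyCompact.of_seq_clusterPt fun x hx => ?_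
  obtain ⟨B, hCB, hBA, hB⟩ :=
    h (range x ∩ A) inter_subset_right ((countable_range x).mono inter_subset_left)
  obtain ⟨a, ha, hxa⟩ := hB.seq_clusterPt x (hx.mono fun n hn => hCB ⟨mem_range_self n, hn⟩)
  exact ⟨a, hBA ha, hxa⟩

/-- If `K` and `L` are subgroups of a topological abelian group `G`, `K` is countably
compact and `L` is ω-bounded, then `K + L` is a countably compact subgroup of `G`. -/
theorem countablyCompact_add_of_omegaBounded (G : Type u) [AddCommGroup G]
    [TopologicalSpace G] [IsTopologicalAddGroup G] (K L : AddSubgroup G)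
    (hK : CountablyCompact K) (hL : OmegaBounded L) :
    (∃ S : AddSubgroup G, (S : Set G) = (K : Set G) + (L : Set G)) ∧
      CountablyCompact ((K : Set G) + (L : Set G)) := by
  refine ⟨⟨K ⊔ L, AddSubgroup.add_normal K L⟩, ?_⟩
  rw [← isCountablyCompact_iff_countablyCompact]
  refine IsCountablyCompact.of_forall_countable_subset fun C hC hCc => ?_
  have hsummand : ∀ c : C, ∃ l : L, (c : G) - l ∈ K := fun c => by
    obtain ⟨k, hk, l, hl, hkl⟩ := hC c.2
    exact ⟨⟨l, hl⟩, by simpa [← hkl] using hk⟩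
  choose l hl using hsummand
  have := hCc.to_subtype
  refine ⟨K + Subtype.val '' closure (range l), fun c hc => ?_,
    add_subset_add_left (image_subset_iff.2 fun l _ => l.2),
    (isCountablyCompact_iff_countablyCompact.2 hK).add
      ((hL _ (countable_range l)).image continuous_subtype_val)⟩
  exact ⟨_, hl ⟨c, hc⟩, _, ⟨_, subset_closure (mem_range_self _), rfl⟩, sub_add_cancel _ _⟩
end

section
/- There exists a sequence (φ_m)_{m∈ω} of functions from ω to ω with the property: for every k ≥ 1, every injective tuple (m_1,…,m_k) ∈ ω^k, and all tuples (j_{1,1},…,j_{k,1}), (j_{1,2},…,j_{k,2}) ∈ ω^k, there exists n ∈ ω such that φ_{m_i}(n) = j_{i,1} and φ_{m_i}(n+1) = j_{i,2} for all 1 ≤ i ≤ k. -/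
/-!
Enumerate all pairs `(f₁, f₂)` of finitely supported functions `ℕ → ℕ` as `p 0, p 1, …` and let
`φ · (2c)` and `φ · (2c + 1)` be the two components of `p c`. Any finitely many prescribed values
at distinct indices `m i` are the values of a finitely supported function, so every requirement
is met at some even time `n = 2c`.
-/

open Function

lemma exists_finsupp_apply_eq {ι α M : Type*} [Zero M] [Finite ι] {m : ι → α}
    (hm : Injective m) (j : ι → M) : ∃ f : α →₀ M, ∀ i, f (m i) = j i :=
  ⟨Finsupp.embDomain ⟨m, hm⟩ (Finsupp.equivFunOnFinite.symm j), fun i =>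
    Finsupp.embDomain_apply_self ⟨m, hm⟩ _ i⟩

lemma exists_seq_interleave {α β γ : Type*} [Countable γ] [Nonempty γ] (g₁ g₂ : γ → α → β) :
    ∃ φ : α → ℕ → β, ∀ c, ∃ n, ∀ a, φ a n = g₁ c a ∧ φ a (n + 1) = g₂ c a := by
  obtain ⟨s, hs⟩ := exists_surjective_nat γ
  refine ⟨fun a n => if n % 2 = 0 then g₁ (s (n / 2)) a else g₂ (s (n / 2)) a, fun c => ?_⟩
  obtain ⟨t, rfl⟩ := hs c
  refine ⟨2 * t, fun a => ⟨?_, ?_⟩⟩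
  · simp
  · have hmod : (2 * t + 1) % 2 = 1 := by omega
    have hdiv : (2 * t + 1) / 2 = t := by omega
    simp [hmod, hdiv]

/-- There is a sequence `φ : ℕ → ℕ → ℕ` of functions such that for every `k ≥ 1`, every
injective tuple `(m 1, …, m k)` and arbitrary tuples `(j₁ 1, …, j₁ k)`, `(j₂ 1, …, j₂ k)`
there exists `n` with `φ (m i) n = j₁ i` and `φ (m i) (n + 1) = j₂ i` for all `i`. -/
theorem exists_universal_function_sequence :
    ∃ φ : ℕ → ℕ → ℕ, ∀ k : ℕ, 1 ≤ k → ∀ m j₁ j₂ : Fin k → ℕ, Function.Injective m →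
      ∃ n : ℕ, ∀ i : Fin k, φ (m i) n = j₁ i ∧ φ (m i) (n + 1) = j₂ i := by
  obtain ⟨φ, hφ⟩ := exists_seq_interleave (γ := (ℕ →₀ ℕ) × (ℕ →₀ ℕ))
    (fun p => p.1) (fun p => p.2)
  refine ⟨φ, fun k _ m j₁ j₂ hm => ?_⟩
  obtain ⟨f₁, hf₁⟩ := exists_finsupp_apply_eq hm j₁
  obtain ⟨f₂, hf₂⟩ := exists_finsupp_apply_eq hm j₂
  obtain ⟨n, hn⟩ := hφ (f₁, f₂)
  exact ⟨n, fun i => by simpa [hf₁, hf₂] using hn (m i)⟩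
end
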